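/- arXiv:1705.05117 — 2 statements merged into one kernel-verified Lean document; each statement's English description precedes it below -/
import Mathlib

section
/- Let y : [0,∞) → ℝ be a nonnegative differentiable function and let σ, c₁, c₂ ∈ (0,∞) be constants such that y′(t) ≤ c₁·y(t)^{1+σ} + c₂ for all t ≥ 0. Set v₀ = y(0) + 1. Then for every t ≥ 0 such that (v₀^{−σ} + c₁/c₂)·e^{−σ c₂ t} − c₁/c₂ > 0, one has y(t) ≤ ((v₀^{−σ} + c₁/c₂)·e^{−σ c₂ t} − c₁/c₂)^{−1/σ} − 1. -/
/-!
Put `v = y + 1 ≥ 1`. Then `v' ≤ c₁ v^{1+σ} + c₂ ≤ c₁ v^{1+σ} + c₂ v`, a Bernoulli inequality, so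
`w = v^{-σ} + c₁/c₂` satisfies the linear differential inequality `w' ≥ -σ c₂ w`. Hence
`w(t) e^{σ c₂ t}` is nondecreasing, i.e. `v(t)^{-σ} ≥ w(0) e^{-σ c₂ t} - c₁/c₂`, and raising both
sides to the negative power `-1/σ` reverses this into the claimed bound.
-/

open Real Set

theorem mul_exp_neg_le_of_deriv_ge_neg_mul {u u' : ℝ → ℝ} {a : ℝ}
    (hu : ∀ s, 0 ≤ s → HasDerivWithinAt u (u' s) (Ici 0) s)
    (hu' : ∀ s, 0 < s → -(a * u s) ≤ u' s) {t : ℝ} (ht : 0 ≤ t) :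
    u 0 * exp (-a * t) ≤ u t := by
  have hderiv : ∀ s, 0 ≤ s → HasDerivWithinAt (fun s => u s * exp (a * s))
      (u' s * exp (a * s) + u s * (exp (a * s) * a)) (Ici 0) s := fun s hs =>
    (hu s hs).mul ((hasDerivAt_const_mul a).exp.hasDerivWithinAt)
  have hmono : MonotoneOn (fun s => u s * exp (a * s)) (Ici 0) := by
    refine monotoneOn_of_hasDerivWithinAt_nonneg (convex_Ici 0)
      (f' := fun s => u' s * exp (a * s) + u s * (exp (a * s) * a))
      (fun s hs => (hderiv s hs).continuousWithinAt) (fun s hs => ?_) (fun s hs => ?_)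
    · rw [interior_Ici] at hs ⊢
      exact (hderiv s hs.le).mono Ioi_subset_Ici_self
    · rw [interior_Ici] at hs
      have : 0 ≤ exp (a * s) * (u' s + a * u s) :=
        mul_nonneg (exp_pos _).le (by linarith [hu' s hs])
      linarith
  have h0t : u 0 ≤ u t * exp (a * t) := by
    simpa using hmono self_mem_Ici ht ht
  calc u 0 * exp (-a * t) ≤ u t * exp (a * t) * exp (-a * t) := by gcongr
    _ = u t := by rw [mul_assoc, ← exp_add, neg_mul, add_neg_cancel, exp_zero, mul_one]

theorem neg_mul_rpow_neg_add_div_le {σ c₁ c₂ v v' : ℝ} (hσ : 0 ≤ σ) (hc₂ : 0 < c₂)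
    (hv : 1 ≤ v) (hv' : v' ≤ c₁ * v ^ (1 + σ) + c₂) :
    -(σ * c₂ * (v ^ (-σ) + c₁ / c₂)) ≤ v' * -σ * v ^ (-σ - 1) := by
  have hv₀ : 0 < v := by linarith
  have hcancel : v ^ (-σ - 1) * v ^ (1 + σ) = 1 := by
    rw [← rpow_add hv₀, neg_sub_left, neg_add_cancel, rpow_zero]
  have hpow : v ^ (-σ - 1) ≤ v ^ (-σ) := rpow_le_rpow_of_exponent_le hv (by linarith)
  have hbound : v ^ (-σ - 1) * v' ≤ c₁ + c₂ * v ^ (-σ) :=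
    calc v ^ (-σ - 1) * v' ≤ v ^ (-σ - 1) * (c₁ * v ^ (1 + σ) + c₂) := by gcongr
      _ = c₁ + c₂ * v ^ (-σ - 1) := by linear_combination c₁ * hcancel
      _ ≤ c₁ + c₂ * v ^ (-σ) := by gcongr
  calc -(σ * c₂ * (v ^ (-σ) + c₁ / c₂)) = -(σ * (c₁ + c₂ * v ^ (-σ))) := by
        field_simp; ring
    _ ≤ -(σ * (v ^ (-σ - 1) * v')) := by gcongr
    _ = v' * -σ * v ^ (-σ - 1) := by ring

/-- Gronwall-type lemma (Lemma 2.1): if `y` is nonnegative and differentiable on `[0,∞)`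
with `y' ≤ c₁ y^{1+σ} + c₂`, then `y(t) ≤ ((v₀^{-σ} + c₁/c₂) e^{-σ c₂ t} - c₁/c₂)^{-1/σ} - 1`
wherever the expression in parentheses is positive, where `v₀ = y(0) + 1`. -/
theorem stmt_0 (y y' : ℝ → ℝ) (σ c₁ c₂ : ℝ)
    (hσ : 0 < σ) (hc₁ : 0 < c₁) (hc₂ : 0 < c₂)
    (hy_nonneg : ∀ t, 0 ≤ t → 0 ≤ y t)
    (hy_deriv : ∀ t, 0 ≤ t → HasDerivWithinAt y (y' t) (Set.Ici 0) t)
    (hineq : ∀ t, 0 ≤ t → y' t ≤ c₁ * (y t) ^ (1 + σ) + c₂) :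
    ∀ t, 0 ≤ t →
      0 < ((y 0 + 1) ^ (-σ) + c₁ / c₂) * Real.exp (-σ * c₂ * t) - c₁ / c₂ →
      y t ≤ (((y 0 + 1) ^ (-σ) + c₁ / c₂) * Real.exp (-σ * c₂ * t) - c₁ / c₂) ^ (-(1 / σ)) - 1 := by
  intro t ht hE
  have hv : ∀ s, 0 ≤ s → 1 ≤ y s + 1 := fun s hs => by linarith [hy_nonneg s hs]
  have hv' : ∀ s, 0 ≤ s → y' s ≤ c₁ * (y s + 1) ^ (1 + σ) + c₂ := fun s hs => by
    have hpow : y s ^ (1 + σ) ≤ (y s + 1) ^ (1 + σ) :=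
      rpow_le_rpow (hy_nonneg s hs) (by linarith) (by linarith)
    linarith [hineq s hs, mul_le_mul_of_nonneg_left hpow hc₁.le]
  have hw : ∀ s, 0 ≤ s → HasDerivWithinAt (fun s => (y s + 1) ^ (-σ) + c₁ / c₂)
      (y' s * -σ * (y s + 1) ^ (-σ - 1)) (Ici 0) s := fun s hs =>
    (((hy_deriv s hs).add_const 1).rpow_const (Or.inl (by linarith [hv s hs]))).add_const _
  have hlower : ((y 0 + 1) ^ (-σ) + c₁ / c₂) * exp (-σ * c₂ * t) - c₁ / c₂ ≤ (y t + 1) ^ (-σ) := by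
    have := mul_exp_neg_le_of_deriv_ge_neg_mul (a := σ * c₂) hw
      (fun s hs => neg_mul_rpow_neg_add_div_le hσ.le hc₂ (hv s hs.le) (hv' s hs.le)) ht
    rw [neg_mul σ c₂]
    linarith
  have hinv := (le_rpow_inv_iff_of_neg (by linarith [hv t ht]) hE (neg_lt_zero.mpr hσ)).mpr hlower
  rw [inv_neg, ← one_div] at hinv
  linarith
end

section
/- Let α, λ ∈ (0,∞) be given and let {b_k}_{k≥0} be a sequence of nonnegative real numbers satisfying b_k ≤ b_0 + λ·b_{k−1}^{1+α} for all k = 1, 2, …. If 2λ·(2b_0)^α < 1, then b_k ≤ b_0 / (1 − λ·(2b_0)^α) for all k ≥ 0. -/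
/-!
Put `c = λ (2b₀)^α` and `M = b₀ / (1 - c)`. Since `c < 1/2` we have `M ≤ 2b₀`, hence
`M^(1+α) = M · M^α ≤ (2b₀)^α · M`, so `b₀ + λ M^(1+α) ≤ b₀ + c M = M`: the bound `M` is
mapped below itself by the monotone recursion map `x ↦ b₀ + λ x^(1+α)`, and induction on `k`
keeps every `b_k` below it.
-/

open Set

theorem le_of_succ_le_map_of_monotoneOn {β : Type*} [Preorder β] {s : Set β} {f : ℕ → β}
    {g : β → β} {M : β} (hg : MonotoneOn g s) (hfs : ∀ k, f k ∈ s) (hMs : M ∈ s)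
    (hf : ∀ k, f (k + 1) ≤ g (f k)) (hgM : g M ≤ M) (h0 : f 0 ≤ M) :
    ∀ k, f k ≤ M
  | 0 => h0
  | k + 1 =>
    have ih := le_of_succ_le_map_of_monotoneOn hg hfs hMs hf hgM h0 k
    (hf k).trans <| (hg (hfs k) hMs ih).trans hgM

theorem add_mul_rpow_div_one_sub_le {α lam b₀ : ℝ} (hα : 0 ≤ α) (hlam : 0 ≤ lam) (hb₀ : 0 ≤ b₀)
    (hsmall : 2 * lam * (2 * b₀) ^ α < 1) :
    b₀ + lam * (b₀ / (1 - lam * (2 * b₀) ^ α)) ^ (1 + α) ≤ b₀ / (1 - lam * (2 * b₀) ^ α) := by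
  set c := lam * (2 * b₀) ^ α
  set M := b₀ / (1 - c)
  have hc : 0 ≤ c := by positivity
  have hc1 : 0 < 1 - c := by linarith
  have hM : 0 ≤ M := by positivity
  have hM_fix : b₀ + c * M = M := by
    simp only [M]
    field_simp
    ring
  have hM_le : M ≤ 2 * b₀ := by
    rw [div_le_iff₀ hc1]
    nlinarith
  have hM_pow : M ^ (1 + α) ≤ (2 * b₀) ^ α * M := by
    rw [Real.rpow_add' hM (by linarith), Real.rpow_one, mul_comm]
    exact mul_le_mul_of_nonneg_right (Real.rpow_le_rpow hM hM_le hα) hM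
  calc b₀ + lam * M ^ (1 + α) ≤ b₀ + c * M := by
        simp only [c, mul_assoc]
        gcongr
    _ = M := hM_fix

/-- Lemma 2.2: if `b_k ≤ b_0 + λ b_{k-1}^{1+α}` for a sequence of nonnegative numbers and
`2λ(2b₀)^α < 1`, then `b_k ≤ b₀ / (1 - λ (2b₀)^α)` for all `k`. -/
theorem stmt_1 (α lam : ℝ) (hα : 0 < α) (hlam : 0 < lam)
    (b : ℕ → ℝ) (hb : ∀ k, 0 ≤ b k)
    (hrec : ∀ k : ℕ, 1 ≤ k → b k ≤ b 0 + lam * (b (k - 1)) ^ (1 + α))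
    (hsmall : 2 * lam * (2 * b 0) ^ α < 1) :
    ∀ k : ℕ, b k ≤ b 0 / (1 - lam * (2 * b 0) ^ α) := by
  have hc : 0 ≤ lam * (2 * b 0) ^ α := mul_nonneg hlam.le (Real.rpow_nonneg (by linarith [hb 0]) α)
  have hc1 : 0 < 1 - lam * (2 * b 0) ^ α := by linarith
  have hg : MonotoneOn (fun x => b 0 + lam * x ^ (1 + α)) (Ici 0) := fun x hx y _ hxy => by
    dsimp only
    gcongr
  exact le_of_succ_le_map_of_monotoneOn hg hb (div_nonneg (hb 0) hc1.le)
    (fun k => hrec (k + 1) k.succ_pos) (add_mul_rpow_div_one_sub_le hα.le hlam.le (hb 0) hsmall)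
    (le_div_self (hb 0) hc1 (by linarith))
end
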